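/- arXiv:1511.07559 — 5 statements merged into one kernel-verified Lean document; each statement's English description precedes it below -/
import Mathlib

section
/- Let m, M, ρ be real numbers with 0 < m ≤ M and ρ ≥ 0, and define θ := (√(ρ²(M−m)² + 4Mm) − ρ(M−m))/2. Then the two optimality ratios coincide at this threshold: (θ + ρM)/m = (M + ρθ)/θ. -/
/-!
θ is the positive root of the quadratic `x² + ρ(M - m) x - M m`, and cross-multiplying the
two ratios turns their equality into exactly this quadratic equation at `x = θ`.
-/

open Real

lemma sqrt_discrim_sub_div_two_pos (b : ℝ) {c : ℝ} (hc : 0 < c) :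
    0 < (√(b ^ 2 + 4 * c) - b) / 2 := by
  have hlt : |b| < √(b ^ 2 + 4 * c) := by
    rw [← sqrt_sq_eq_abs]
    exact sqrt_lt_sqrt (sq_nonneg b) (by linarith)
  linarith [le_abs_self b]

lemma sqrt_discrim_sub_div_two_isRoot (b : ℝ) {c : ℝ} (hc : 0 ≤ c) :
    ((√(b ^ 2 + 4 * c) - b) / 2) ^ 2 + b * ((√(b ^ 2 + 4 * c) - b) / 2) = c := by
  have hs : √(b ^ 2 + 4 * c) ^ 2 = b ^ 2 + 4 * c := sq_sqrt (by positivity)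
  linear_combination hs / 4

theorem threshold_ratios_coincide_general (m M ρ θ : ℝ)
    (hm : 0 < m) (hmM : m ≤ M)
    (hθ : θ = (Real.sqrt (ρ^2 * (M - m)^2 + 4 * M * m) - ρ * (M - m)) / 2) :
    (θ + ρ * M) / m = (M + ρ * θ) / θ := by
  have hMm : 0 < M * m := mul_pos (hm.trans_le hmM) hm
  rw [show ρ ^ 2 * (M - m) ^ 2 + 4 * M * m = (ρ * (M - m)) ^ 2 + 4 * (M * m) by ring] at hθ
  have hθpos : 0 < θ := hθ ▸ sqrt_discrim_sub_div_two_pos _ hMm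
  have hroot := sqrt_discrim_sub_div_two_isRoot (ρ * (M - m)) hMm.le
  rw [← hθ] at hroot
  rw [div_eq_div_iff hm.ne' hθpos.ne']
  linear_combination hroot

/-- At the threshold θ, the two adversarial optimality ratios coincide:
(θ + ρM)/m = (M + ρθ)/θ. -/
theorem threshold_ratios_coincide (m M ρ θ : ℝ)
    (hm : 0 < m) (hmM : m ≤ M) (hρ : 0 ≤ ρ)
    (hθ : θ = (Real.sqrt (ρ^2 * (M - m)^2 + 4 * M * m) - ρ * (M - m)) / 2) :
    (θ + ρ * M) / m = (M + ρ * θ) / θ :=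
  threshold_ratios_coincide_general m M ρ θ hm hmM hθ
end

section
/- Let φ ≥ 1 be a real number and define CR(ρ) := (1/2)·(ρφ + ρ + √(4φ + ρ²(φ−1)²)). Then for all 0 ≤ ρ ≤ 1 it holds that √φ ≤ CR(ρ) ≤ φ + 1. -/
/-!
Since `0 ≤ ρ ≤ 1`, the radicand lies between `4φ` and `4φ + (φ - 1)² = (φ + 1)²`, and the
linear part `ρφ + ρ = ρ(φ + 1)` lies between `0` and `φ + 1`.
-/

namespace Real

theorem two_mul_sqrt_le_sqrt_four_mul_add {a b : ℝ} (hb : 0 ≤ b) :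
    2 * √a ≤ √(4 * a + b) := by
  have h4 : √(4 * a) = 2 * √a := by
    rw [sqrt_mul zero_le_four, show (4 : ℝ) = 2 ^ 2 by norm_num, sqrt_sq zero_le_two]
  rw [← h4]
  exact sqrt_le_sqrt (by linarith)

theorem sqrt_four_mul_add_sq_mul_sub_one_sq_le {φ ρ : ℝ} (hφ : -1 ≤ φ) (hρ : ρ ^ 2 ≤ 1) :
    √(4 * φ + ρ ^ 2 * (φ - 1) ^ 2) ≤ φ + 1 := by
  have hsq : 4 * φ + (φ - 1) ^ 2 = (φ + 1) ^ 2 := by ring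
  rw [sqrt_le_left (by linarith)]
  nlinarith [mul_le_mul_of_nonneg_right hρ (sq_nonneg (φ - 1))]

end Real

/-- For ρ ∈ [0,1], the competitive ratio satisfies √φ ≤ CR(ρ) ≤ φ + 1. -/
theorem CR_bounds (φ : ℝ) (CR : ℝ → ℝ)
    (hφ : 1 ≤ φ)
    (hCR : ∀ ρ : ℝ, CR ρ = (1/2) * (ρ * φ + ρ + Real.sqrt (4 * φ + ρ^2 * (φ - 1)^2))) :
    ∀ ρ : ℝ, 0 ≤ ρ → ρ ≤ 1 → Real.sqrt φ ≤ CR ρ ∧ CR ρ ≤ φ + 1 := by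
  intro ρ hρ₀ hρ₁
  have hlin₀ : 0 ≤ ρ * φ + ρ := by nlinarith
  have hlin₁ : ρ * φ + ρ ≤ φ + 1 := by nlinarith
  have hrad₀ : 2 * √φ ≤ √(4 * φ + ρ ^ 2 * (φ - 1) ^ 2) :=
    Real.two_mul_sqrt_le_sqrt_four_mul_add (by positivity)
  have hrad₁ : √(4 * φ + ρ ^ 2 * (φ - 1) ^ 2) ≤ φ + 1 :=
    Real.sqrt_four_mul_add_sq_mul_sub_one_sq_le (by linarith) (by nlinarith)
  rw [hCR]
  constructor <;> linarith
end

section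
/- Let 0 < m ≤ M, 0 ≤ ρ ≤ 1 and t with m ≤ t ≤ √(Mm). Let a₁, b₁, a₂, b₂, a₃, b₃ be nonnegative reals with b₁ ≤ a₁, b₂ ≤ ρ·a₂, ρ·a₃ ≤ b₃ ≤ a₃, and set a := a₁ + a₂ + a₃, with b₁ + b₂ + b₃ = ρ·a. Define ζ₁ := (a₁−b₁)M, ξ₁ := (a₁−b₁)t, ζ₂ := (1−ρ)a₂·t + (ρa₂−b₂)M, ξ₂ := (a₂−b₂)m, ζ₃ := (1−ρ)a₃·t, ξ₃ := (a₃−b₃)m. If ξ₁ + ξ₂ + ξ₃ > 0, then (ζ₁ + ζ₂ + ζ₃)/(ξ₁ + ξ₂ + ξ₃) ≤ max{(t + ρM)/m, (M + ρt)/t}. -/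
/-! Using the balance `b₁ + b₂ + b₃ = ρ a`, the online cost is
`(a₁ - b₁)(M + ρt) + (a₂ - b₂)(t + ρM) + (a₃ - b₃)t - (1 - ρ)(b₁t + b₂M)`.
Dropping the nonnegative last term, the three remaining summands are at most `(M + ρt)/t`,
`(t + ρM)/m` and `t/m ≤ (t + ρM)/m` times the matching summands `(aᵢ - bᵢ)t`, `(aᵢ - bᵢ)m`
of the offline cost. -/

theorem online_cost_eq_of_balance {M ρ t a₁ b₁ a₂ b₂ a₃ b₃ : ℝ}
    (hsum : b₁ + b₂ + b₃ = ρ * (a₁ + a₂ + a₃)) :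
    (a₁ - b₁) * M + ((1 - ρ) * a₂ * t + (ρ * a₂ - b₂) * M) + (1 - ρ) * a₃ * t
      = (a₁ - b₁) * (M + ρ * t) + (a₂ - b₂) * (t + ρ * M) + (a₃ - b₃) * t
        - (1 - ρ) * (b₁ * t + b₂ * M) := by
  linear_combination t * hsum

theorem lemma_fmax_general (m M ρ t a₁ b₁ a₂ b₂ a₃ b₃ : ℝ)
    (hm : 0 < m) (hmM : m ≤ M) (hρ0 : 0 ≤ ρ) (hρ1 : ρ ≤ 1)
    (htm : m ≤ t)
    (hb₁0 : 0 ≤ b₁) (ha₂ : 0 ≤ a₂) (hb₂0 : 0 ≤ b₂)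
    (hb₁ : b₁ ≤ a₁) (hb₂ : b₂ ≤ ρ * a₂) (hb₃u : b₃ ≤ a₃)
    (hsum : b₁ + b₂ + b₃ = ρ * (a₁ + a₂ + a₃))
    (hpos : 0 < (a₁ - b₁) * t + (a₂ - b₂) * m + (a₃ - b₃) * m) :
    ((a₁ - b₁) * M + ((1 - ρ) * a₂ * t + (ρ * a₂ - b₂) * M) + (1 - ρ) * a₃ * t) /
      ((a₁ - b₁) * t + (a₂ - b₂) * m + (a₃ - b₃) * m)
      ≤ max ((t + ρ * M) / m) ((M + ρ * t) / t) := by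
  have ht : 0 < t := hm.trans_le htm
  set K := max ((t + ρ * M) / m) ((M + ρ * t) / t)
  have hK₁ : M + ρ * t ≤ K * t := (div_le_iff₀ ht).1 (le_max_right _ _)
  have hK₂ : t + ρ * M ≤ K * m := (div_le_iff₀ hm).1 (le_max_left _ _)
  have hM : 0 ≤ M := hm.le.trans hmM
  have hρM : 0 ≤ ρ * M := mul_nonneg hρ0 hM
  have hu : 0 ≤ a₁ - b₁ := sub_nonneg.2 hb₁
  have hv : 0 ≤ a₂ - b₂ := sub_nonneg.2 (hb₂.trans (mul_le_of_le_one_left ha₂ hρ1))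
  have hw : 0 ≤ a₃ - b₃ := sub_nonneg.2 hb₃u
  have hloss : 0 ≤ (1 - ρ) * (b₁ * t + b₂ * M) := by
    have : 0 ≤ 1 - ρ := sub_nonneg.2 hρ1
    positivity
  rw [div_le_iff₀ hpos, online_cost_eq_of_balance hsum]
  calc (a₁ - b₁) * (M + ρ * t) + (a₂ - b₂) * (t + ρ * M) + (a₃ - b₃) * t
        - (1 - ρ) * (b₁ * t + b₂ * M)
      ≤ (a₁ - b₁) * (M + ρ * t) + (a₂ - b₂) * (t + ρ * M) + (a₃ - b₃) * (t + ρ * M) := by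
        have := mul_le_mul_of_nonneg_left (le_add_of_nonneg_right hρM : t ≤ t + ρ * M) hw
        linarith
    _ ≤ (a₁ - b₁) * (K * t) + (a₂ - b₂) * (K * m) + (a₃ - b₃) * (K * m) := by gcongr
    _ = K * ((a₁ - b₁) * t + (a₂ - b₂) * m + (a₃ - b₃) * m) := by ring

/-- Lemma 1 of the paper: the decomposed worst-case cost ratio is bounded by
max{(t + ρM)/m, (M + ρt)/t}, where t = θ·(η_d/η_c). -/
theorem lemma_fmax (m M ρ t a₁ b₁ a₂ b₂ a₃ b₃ : ℝ)
    (hm : 0 < m) (hmM : m ≤ M) (hρ0 : 0 ≤ ρ) (hρ1 : ρ ≤ 1)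
    (htm : m ≤ t) (htM : t ≤ Real.sqrt (M * m))
    (ha₁ : 0 ≤ a₁) (hb₁0 : 0 ≤ b₁) (ha₂ : 0 ≤ a₂) (hb₂0 : 0 ≤ b₂)
    (ha₃ : 0 ≤ a₃) (hb₃0 : 0 ≤ b₃)
    (hb₁ : b₁ ≤ a₁) (hb₂ : b₂ ≤ ρ * a₂) (hb₃l : ρ * a₃ ≤ b₃) (hb₃u : b₃ ≤ a₃)
    (hsum : b₁ + b₂ + b₃ = ρ * (a₁ + a₂ + a₃))
    (hpos : 0 < (a₁ - b₁) * t + (a₂ - b₂) * m + (a₃ - b₃) * m) :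
    ((a₁ - b₁) * M + ((1 - ρ) * a₂ * t + (ρ * a₂ - b₂) * M) + (1 - ρ) * a₃ * t) /
      ((a₁ - b₁) * t + (a₂ - b₂) * m + (a₃ - b₃) * m)
      ≤ max ((t + ρ * M) / m) ((M + ρ * t) / t) :=
  lemma_fmax_general m M ρ t a₁ b₁ a₂ b₂ a₃ b₃ hm hmM hρ0 hρ1 htm hb₁0 ha₂ hb₂0 hb₁ hb₂ hb₃u hsum
    hpos
end

section
/- Let 0 < m ≤ M, 0 ≤ ρ ≤ 1 and t with m ≤ t ≤ √(Mm). Let a, a₁, b₁, a₃, b₃ be nonnegative reals with b₁ ≤ a₁, b₃ ≤ a₃, a₁ + a₃ = a, b₁ + b₃ = ρ·a, and b₁ ≥ a₁ − (1−ρ)a. Define ζ₁ := (a₁−b₁)M, ξ₁ := (a₁−b₁)t, ζ₃ := (1−ρ)a₃·t, ξ₃ := (a₃−b₃)m. Then (ξ₁ + ξ₃)·(M + ρt) − (ζ₁ + ζ₃)·t ≥ 0; consequently if ξ₁ + ξ₃ > 0, then (ζ₁ + ζ₃)/(ξ₁ + ξ₃) ≤ (M + ρt)/t. -/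
/-! After eliminating `a` through `a₁ + a₃ = a` and `b₁ + b₃ = ρ a`, the gap
`(ξ₁ + ξ₃)(M + ρt) − (ζ₁ + ζ₃)t` is the sum of the three nonnegative terms
`(1 − ρ) b₁ t²`, `(a₃ − b₃)(Mm − t²)` and `ρ (a₃ − b₃) m t`; the middle one is
nonnegative because `t ≤ √(Mm)`. -/

theorem boundary_gap_eq {R : Type*} [CommRing R] {m M ρ t a a₁ b₁ a₃ b₃ : R}
    (hsuma : a₁ + a₃ = a) (hsumb : b₁ + b₃ = ρ * a) :
    ((a₁ - b₁) * t + (a₃ - b₃) * m) * (M + ρ * t) - ((a₁ - b₁) * M + (1 - ρ) * a₃ * t) * t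
      = (1 - ρ) * b₁ * t ^ 2 + (a₃ - b₃) * (M * m - t ^ 2) + ρ * (a₃ - b₃) * m * t := by
  linear_combination t ^ 2 * ρ * hsuma - t ^ 2 * hsumb

theorem boundary_gap_nonneg {m M ρ t a a₁ b₁ a₃ b₃ : ℝ}
    (hm : 0 ≤ m) (ht : 0 ≤ t) (htM : t ^ 2 ≤ M * m) (hρ0 : 0 ≤ ρ) (hρ1 : ρ ≤ 1)
    (hb₁0 : 0 ≤ b₁) (hb₃ : b₃ ≤ a₃)
    (hsuma : a₁ + a₃ = a) (hsumb : b₁ + b₃ = ρ * a) :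
    0 ≤ ((a₁ - b₁) * t + (a₃ - b₃) * m) * (M + ρ * t)
      - ((a₁ - b₁) * M + (1 - ρ) * a₃ * t) * t := by
  rw [boundary_gap_eq hsuma hsumb]
  have hρ1' : 0 ≤ 1 - ρ := sub_nonneg.2 hρ1
  have hb₃' : 0 ≤ a₃ - b₃ := sub_nonneg.2 hb₃
  have htM' : 0 ≤ M * m - t ^ 2 := sub_nonneg.2 htM
  positivity

theorem lemma_boundary_a2_general (m M ρ t a a₁ b₁ a₃ b₃ : ℝ)
    (hm : 0 < m) (hρ0 : 0 ≤ ρ) (hρ1 : ρ ≤ 1)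
    (htm : m ≤ t) (htM : t ≤ Real.sqrt (M * m))
    (hb₁0 : 0 ≤ b₁) (hb₃ : b₃ ≤ a₃)
    (hsuma : a₁ + a₃ = a) (hsumb : b₁ + b₃ = ρ * a) :
    ((a₁ - b₁) * t + (a₃ - b₃) * m) * (M + ρ * t) -
      ((a₁ - b₁) * M + (1 - ρ) * a₃ * t) * t ≥ 0
    ∧ (0 < (a₁ - b₁) * t + (a₃ - b₃) * m →
        ((a₁ - b₁) * M + (1 - ρ) * a₃ * t) /
          ((a₁ - b₁) * t + (a₃ - b₃) * m) ≤ (M + ρ * t) / t) := by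
  have ht : 0 < t := hm.trans_le htm
  have gap := boundary_gap_nonneg hm.le ht.le ((Real.le_sqrt' ht).1 htM) hρ0 hρ1 hb₁0 hb₃
    hsuma hsumb
  refine ⟨gap, fun hξ => ?_⟩
  rw [div_le_div_iff₀ hξ ht]
  linarith

/-- Boundary case a₂ = 0 in the proof of Lemma 1:
(ξ₁ + ξ₃)(M + ρt) − (ζ₁ + ζ₃)t ≥ 0, hence the ratio bound. -/
theorem lemma_boundary_a2 (m M ρ t a a₁ b₁ a₃ b₃ : ℝ)
    (hm : 0 < m) (hmM : m ≤ M) (hρ0 : 0 ≤ ρ) (hρ1 : ρ ≤ 1)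
    (htm : m ≤ t) (htM : t ≤ Real.sqrt (M * m))
    (ha : 0 ≤ a) (ha₁ : 0 ≤ a₁) (hb₁0 : 0 ≤ b₁) (ha₃ : 0 ≤ a₃) (hb₃0 : 0 ≤ b₃)
    (hb₁ : b₁ ≤ a₁) (hb₃ : b₃ ≤ a₃)
    (hsuma : a₁ + a₃ = a) (hsumb : b₁ + b₃ = ρ * a)
    (hb₁lb : b₁ ≥ a₁ - (1 - ρ) * a) :
    ((a₁ - b₁) * t + (a₃ - b₃) * m) * (M + ρ * t) -
      ((a₁ - b₁) * M + (1 - ρ) * a₃ * t) * t ≥ 0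
    ∧ (0 < (a₁ - b₁) * t + (a₃ - b₃) * m →
        ((a₁ - b₁) * M + (1 - ρ) * a₃ * t) /
          ((a₁ - b₁) * t + (a₃ - b₃) * m) ≤ (M + ρ * t) / t) :=
  lemma_boundary_a2_general m M ρ t a a₁ b₁ a₃ b₃ hm hρ0 hρ1 htm htM hb₁0 hb₃ hsuma hsumb
end

section
/- Let m, M, B be real numbers with 0 < m ≤ M and B > 0, and set φ := M/m. For z ∈ ℝ define g(z) := max{(z√(Mm) + m(B−z))/(mB), (z√(Mm) + M(B−z))/(√(Mm)·B)}. Then the minimum of g over z ∈ [0, B] equals (1/2)(1 + √φ), and it is attained at z = B/2. -/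
/-! The first ratio is increasing and the second decreasing in `z`, because `√(Mm)` lies
between `m` and `M`; they cross at `z = B/2` with common value `(1 + √φ)/2`, so the larger
of the two is never below that value. -/

lemma le_max_of_monotone_of_antitone {α β : Type*} [LinearOrder α] [LinearOrder β]
    {f g : α → β} (hf : Monotone f) (hg : Antitone g) {c : α} (hfg : f c = g c) (z : α) :
    f c ≤ max (f z) (g z) := by
  rcases le_total c z with h | h
  · exact le_max_of_le_left (hf h)
  · exact le_max_of_le_right (hfg ▸ hg h)

section Interpolation

variable {a b D : ℝ} (B : ℝ)

lemma monotone_interpolation_div (hab : a ≤ b) (hD : 0 ≤ D) :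
    Monotone fun z : ℝ => (z * b + a * (B - z)) / D := fun x y hxy =>
  div_le_div_of_nonneg_right (by nlinarith [mul_nonneg (sub_nonneg.2 hab) (sub_nonneg.2 hxy)]) hD

lemma antitone_interpolation_div (hba : b ≤ a) (hD : 0 ≤ D) :
    Antitone fun z : ℝ => (z * b + a * (B - z)) / D := fun x y hxy =>
  div_le_div_of_nonneg_right (by nlinarith [mul_nonneg (sub_nonneg.2 hba) (sub_nonneg.2 hxy)]) hD

end Interpolation

lemma Real.sqrt_div_eq_sqrt_mul_div {x y : ℝ} (hy : 0 < y) : √(x / y) = √(x * y) / y := by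
  rw [show x / y = x * y / y ^ 2 by field_simp, Real.sqrt_div' _ (by positivity),
    Real.sqrt_sq hy.le]

/-- In the adversarial construction of Theorem 2, the minimum over z ∈ [0,B] of the
worse of the two cost ratios equals (1/2)(1 + √φ), attained at z = B/2. -/
theorem adversary_min (m M B φ : ℝ) (g : ℝ → ℝ)
    (hm : 0 < m) (hmM : m ≤ M) (hB : 0 < B) (hφ : φ = M / m)
    (hg : ∀ z : ℝ, g z =
      max ((z * Real.sqrt (M * m) + m * (B - z)) / (m * B))
          ((z * Real.sqrt (M * m) + M * (B - z)) / (Real.sqrt (M * m) * B))) :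
    (∀ z ∈ Set.Icc (0 : ℝ) B, (1/2) * (1 + Real.sqrt φ) ≤ g z)
    ∧ g (B / 2) = (1/2) * (1 + Real.sqrt φ) := by
  have hMm : 0 < M * m := mul_pos (hm.trans_le hmM) hm
  set s := Real.sqrt (M * m)
  have hs : 0 < s := Real.sqrt_pos.2 hMm
  have hss : s * s = M * m := Real.mul_self_sqrt hMm.le
  have hms : m ≤ s := by nlinarith
  have hsM : s ≤ M := by nlinarith
  have hφs : Real.sqrt φ = s / m := hφ ▸ Real.sqrt_div_eq_sqrt_mul_div hm
  have hleft : (B / 2 * s + m * (B - B / 2)) / (m * B) = (1/2) * (1 + Real.sqrt φ) := by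
    rw [hφs]; field_simp; ring
  have hright : (B / 2 * s + M * (B - B / 2)) / (s * B) = (1/2) * (1 + Real.sqrt φ) := by
    rw [hφs]; field_simp; linear_combination -hss
  refine ⟨fun z _ => ?_, by rw [hg, hleft, hright, max_self]⟩
  rw [hg, ← hleft]
  exact le_max_of_monotone_of_antitone (monotone_interpolation_div B hms (by positivity))
    (antitone_interpolation_div B hsM (by positivity)) (hleft.trans hright.symm) z
end
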